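/- arXiv:2205.10609 — 3 statements merged into one kernel-verified Lean document; each statement's English description precedes it below -/
import Mathlib

section
/- For every integer N ≥ 1 there exist constants δ₀(N) > 0 and C(N) > 0 with the following property: for every 0 < δ ≤ δ₀(N) and every matrix A ∈ ℝ^{N×N} satisfying ‖A·Aᵀ − I‖ ≤ δ, there exists a matrix B ∈ ℝ^{N×N} such that (B·A)·(B·A)ᵀ = I and ‖B − I‖ ≤ C(N)·δ. -/
attribute [local instance] Matrix.frobeniusNormedAddCommGroup Matrix.frobeniusNormSMulClass

/-!
Take `B = (A Aᵀ)^(-1/2)`, defined by the continuous functional calculus of the symmetric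
matrix `S = A Aᵀ`; then `(B A)(B A)ᵀ = B S B = 1`. Diagonalising `S` by an orthogonal matrix
leaves the Frobenius norm unchanged, so `‖f(S)‖` is the `ℓ²` norm of `f` on the eigenvalues of
`S`. Hence every eigenvalue `λ` satisfies `|λ - 1| ≤ ‖S - 1‖ ≤ 1/2`, and the scalar estimate
`|λ^(-1/2) - 1| ≤ 2 |λ - 1|` for `λ ≥ 1/2` gives `‖B - 1‖ ≤ 2 ‖S - 1‖`.
-/

open Matrix

theorem abs_inv_sqrt_sub_one_le {x : ℝ} (hx : 1 / 2 ≤ x) : |(√x)⁻¹ - 1| ≤ 2 * |x - 1| := by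
  have hx0 : 0 < x := by linarith
  have key : (√x)⁻¹ - 1 = (1 - x) / (x + √x) := by
    field_simp
    nlinarith [Real.sq_sqrt hx0.le]
  rw [key, abs_div, abs_sub_comm, abs_of_pos (show 0 < x + √x by positivity),
    div_le_iff₀ (by positivity)]
  have : 1 / 2 ≤ x + √x := by linarith [Real.sqrt_nonneg x]
  nlinarith [mul_le_mul_of_nonneg_left this (abs_nonneg (x - 1))]

namespace Matrix

variable {𝕜 m n : Type*} [RCLike 𝕜] [Fintype m] [Fintype n]

theorem frobenius_norm_sq_eq_re_trace (M : Matrix m n 𝕜) :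
    ‖M‖ ^ 2 = RCLike.re (Mᴴ * M).trace := by
  rw [frobenius_norm_def, ← Real.rpow_natCast, ← Real.rpow_mul (by positivity)]
  simp [trace, mul_apply, Finset.sum_comm (γ := m), RCLike.conj_mul]

theorem frobenius_norm_conjStarAlgAut [DecidableEq n] (U : unitaryGroup n 𝕜)
    (M : Matrix n n 𝕜) : ‖Unitary.conjStarAlgAut 𝕜 _ U M‖ = ‖M‖ := by
  have hU : (U : Matrix n n 𝕜)ᴴ * U = 1 := by
    simpa [star_eq_conjTranspose] using Unitary.coe_star_mul_self U
  rw [← sq_eq_sq₀ (norm_nonneg _) (norm_nonneg _), frobenius_norm_sq_eq_re_trace,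
    frobenius_norm_sq_eq_re_trace, Unitary.conjStarAlgAut_apply, star_eq_conjTranspose]
  simp only [conjTranspose_mul, conjTranspose_conjTranspose, Matrix.mul_assoc]
  rw [← Matrix.mul_assoc (U : Matrix n n 𝕜)ᴴ (U : Matrix n n 𝕜), hU, Matrix.one_mul,
    trace_mul_comm]
  simp only [Matrix.mul_assoc, hU, Matrix.mul_one]

variable [DecidableEq n]

theorem continuousOn_spectrum_real (A : Matrix n n 𝕜) (f : ℝ → ℝ) :
    ContinuousOn f (spectrum ℝ A) :=
  A.finite_real_spectrum.continuousOn f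

namespace IsHermitian

variable {A : Matrix n n 𝕜}

theorem frobenius_norm_cfc_sq (hA : A.IsHermitian) (f : ℝ → ℝ) :
    ‖cfc f A‖ ^ 2 = ∑ i, f (hA.eigenvalues i) ^ 2 := by
  rw [hA.cfc_eq, IsHermitian.cfc, frobenius_norm_conjStarAlgAut, frobenius_norm_diagonal,
    PiLp.norm_sq_eq_of_L2]
  simp

theorem abs_le_frobenius_norm_cfc (hA : A.IsHermitian) (f : ℝ → ℝ) {x : ℝ}
    (hx : x ∈ spectrum ℝ A) : |f x| ≤ ‖cfc f A‖ := by
  obtain ⟨i, rfl⟩ := hA.spectrum_real_eq_range_eigenvalues ▸ hx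
  rw [← sq_le_sq₀ (abs_nonneg _) (norm_nonneg _), sq_abs, hA.frobenius_norm_cfc_sq]
  exact Finset.single_le_sum (f := fun j ↦ f (hA.eigenvalues j) ^ 2) (fun _ _ ↦ sq_nonneg _)
    (Finset.mem_univ i)

theorem frobenius_norm_cfc_le (hA : A.IsHermitian) {f g : ℝ → ℝ}
    (hfg : ∀ x ∈ spectrum ℝ A, |f x| ≤ |g x|) : ‖cfc f A‖ ≤ ‖cfc g A‖ := by
  rw [← sq_le_sq₀ (norm_nonneg _) (norm_nonneg _), hA.frobenius_norm_cfc_sq,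
    hA.frobenius_norm_cfc_sq]
  exact Finset.sum_le_sum fun i _ ↦ sq_le_sq.mpr (hfg _ (hA.eigenvalues_mem_spectrum_real i))

theorem abs_sub_one_le_frobenius_norm (hA : A.IsHermitian) {x : ℝ} (hx : x ∈ spectrum ℝ A) :
    |x - 1| ≤ ‖A - 1‖ := by
  have hcont := A.continuousOn_spectrum_real
  simpa [cfc_sub _ _ A (hcont _) (hcont _), cfc_id' ℝ A, cfc_const_one ℝ A] using
    hA.abs_le_frobenius_norm_cfc (fun x ↦ x - 1) hx

theorem cfc_inv_sqrt_mul_self_mul_cfc_inv_sqrt (hA : A.IsHermitian)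
    (hpos : ∀ x ∈ spectrum ℝ A, 0 < x) :
    cfc (fun x ↦ (√x)⁻¹) A * A * cfc (fun x ↦ (√x)⁻¹) A = 1 := by
  have hcont := A.continuousOn_spectrum_real
  calc cfc (fun x ↦ (√x)⁻¹) A * A * cfc (fun x ↦ (√x)⁻¹) A
      = cfc (fun x ↦ (√x)⁻¹ * x * (√x)⁻¹) A := by
        rw [cfc_mul _ _ A (hcont _) (hcont _), cfc_mul _ _ A (hcont _) (hcont _), cfc_id' ℝ A]
    _ = cfc (fun _ ↦ 1) A := cfc_congr fun x hx ↦ by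
        field_simp
        rw [Real.sq_sqrt (hpos x hx).le, div_self (hpos x hx).ne']
    _ = 1 := cfc_const_one ℝ A

theorem frobenius_norm_cfc_inv_sqrt_sub_one_le (hA : A.IsHermitian) (h : ‖A - 1‖ ≤ 1 / 2) :
    ‖cfc (fun x ↦ (√x)⁻¹) A - 1‖ ≤ 2 * ‖A - 1‖ := by
  have hcont := A.continuousOn_spectrum_real
  calc ‖cfc (fun x ↦ (√x)⁻¹) A - 1‖ = ‖cfc (fun x ↦ (√x)⁻¹ - 1) A‖ := by
        rw [cfc_sub _ _ A (hcont _) (hcont _), cfc_const_one ℝ A]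
    _ ≤ ‖cfc (fun x ↦ 2 * (x - 1)) A‖ := hA.frobenius_norm_cfc_le fun x hx ↦ by
        rw [abs_mul, abs_two]
        exact abs_inv_sqrt_sub_one_le <| by
          linarith [abs_le.mp ((hA.abs_sub_one_le_frobenius_norm hx).trans h)]
    _ = 2 * ‖A - 1‖ := by
        rw [cfc_const_mul _ _ A (hcont _), cfc_sub _ _ A (hcont _) (hcont _), cfc_id' ℝ A,
          cfc_const_one ℝ A, norm_smul, RCLike.norm_two]

end IsHermitian

end Matrix

theorem stmt0_general (N : ℕ) :
    ∃ δ₀ C : ℝ, 0 < δ₀ ∧ 0 < C ∧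
      ∀ δ : ℝ, 0 < δ → δ ≤ δ₀ →
        ∀ A : Matrix (Fin N) (Fin N) ℝ,
          ‖A * A.transpose - 1‖ ≤ δ →
            ∃ B : Matrix (Fin N) (Fin N) ℝ,
              (B * A) * (B * A).transpose = 1 ∧ ‖B - 1‖ ≤ C * δ := by
  refine ⟨1 / 2, 2, by norm_num, by norm_num, fun δ _ hδ A hA ↦ ?_⟩
  have hS : (A * Aᵀ).IsHermitian := by
    simpa [conjTranspose_eq_transpose_of_trivial] using isHermitian_mul_conjTranspose_self A
  set B := cfc (fun x ↦ (√x)⁻¹) (A * Aᵀ)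
  have hB : Bᵀ = B := by
    simpa [star_eq_conjTranspose, conjTranspose_eq_transpose_of_trivial] using
      (cfc_predicate _ _ : IsSelfAdjoint B).star_eq
  refine ⟨B, ?_, ?_⟩
  · calc B * A * (B * A)ᵀ = B * (A * Aᵀ) * B := by
          simp only [transpose_mul, hB, Matrix.mul_assoc]
      _ = 1 := hS.cfc_inv_sqrt_mul_self_mul_cfc_inv_sqrt fun x hx ↦ by
          linarith [abs_le.mp ((hS.abs_sub_one_le_frobenius_norm hx).trans (hA.trans hδ))]
  · calc ‖B - 1‖ ≤ 2 * ‖A * Aᵀ - 1‖ :=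
          hS.frobenius_norm_cfc_inv_sqrt_sub_one_le (hA.trans hδ)
      _ ≤ 2 * δ := by gcongr

/-- For every integer `N ≥ 1` there exist constants `δ₀(N) > 0` and
`C(N) > 0` such that: for every `0 < δ ≤ δ₀` and every matrix `A ∈ ℝ^{N×N}` with
`‖A·Aᵀ − I‖ ≤ δ`, there exists `B ∈ ℝ^{N×N}` with `(B·A)·(B·A)ᵀ = I` and `‖B − I‖ ≤ C·δ`.
(The norm is the Frobenius norm on `N × N` real matrices.) -/
theorem stmt0 (N : ℕ) (hN : 1 ≤ N) :
    ∃ δ₀ C : ℝ, 0 < δ₀ ∧ 0 < C ∧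
      ∀ δ : ℝ, 0 < δ → δ ≤ δ₀ →
        ∀ A : Matrix (Fin N) (Fin N) ℝ,
          ‖A * A.transpose - 1‖ ≤ δ →
            ∃ B : Matrix (Fin N) (Fin N) ℝ,
              (B * A) * (B * A).transpose = 1 ∧ ‖B - 1‖ ≤ C * δ :=
  stmt0_general N
end

section
/- Let E be a real inner product space, let N ≥ 1 be an integer, let v = (v₁,…,v_N) : E → ℝ^N have all components differentiable at a point x ∈ E, and set ρ := Σ_{i=1}^N v_i². Then ρ is differentiable at x with gradient ∇ρ(x) = 2 Σ_i v_i(x) ∇v_i(x), and | ‖∇ρ(x)‖² − 4 ρ(x) | ≤ 4 ρ(x) · Σ_{i,j=1}^N |⟨∇v_i(x), ∇v_j(x)⟩ − δ_{ij}|. Consequently, if ρ(x) > 0 and r := √ρ, then | ‖∇r(x)‖² − 1 | ≤ Σ_{i,j=1}^N |⟨∇v_i(x), ∇v_j(x)⟩ − δ_{ij}|. -/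
/-!
With `c i := 2 * v i x`, the gradient of `ρ` is `∑ c i • g i`, and expanding its squared norm as
a Gram form shows that it deviates from `∑ c i ^ 2 = 4 ρ(x)` by
`∑ i j, c i * c j * (⟪g i, g j⟫ - δ i j)`; each `|c i * c j|` is at most `∑ c k ^ 2`.
The gradient of `√ρ` is that of `ρ` divided by `2 √ρ(x)`, which divides the deviation by `4 ρ(x)`.
-/

open scoped RealInnerProductSpace

open Finset

theorem abs_mul_le_sum_sq {ι : Type*} [Fintype ι] (c : ι → ℝ) (i j : ι) :
    |c i * c j| ≤ ∑ k, c k ^ 2 := by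
  have hi := single_le_sum (f := fun k => c k ^ 2) (fun k _ => sq_nonneg _) (mem_univ i)
  have hj := single_le_sum (f := fun k => c k ^ 2) (fun k _ => sq_nonneg _) (mem_univ j)
  rw [abs_mul]
  nlinarith [sq_abs (c i), sq_abs (c j), sq_nonneg (|c i| - |c j|)]

section Gram

variable {ι E : Type*} [Fintype ι] [DecidableEq ι] [NormedAddCommGroup E] [InnerProductSpace ℝ E]

theorem norm_sq_sum_smul_sub_sum_sq (c : ι → ℝ) (g : ι → E) :
    ‖∑ i, c i • g i‖ ^ 2 - ∑ i, c i ^ 2 =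
      ∑ i, ∑ j, c i * c j * (⟪g i, g j⟫ - if i = j then (1 : ℝ) else 0) := by
  have hgram : ‖∑ i, c i • g i‖ ^ 2 = ∑ i, ∑ j, c i * c j * ⟪g i, g j⟫ := by
    rw [← real_inner_self_eq_norm_sq, sum_inner]
    simp only [inner_sum, real_inner_smul_left, real_inner_smul_right]
    exact sum_congr rfl fun i _ => sum_congr rfl fun j _ => by ring
  have hdiag : ∑ i, ∑ j, c i * c j * (if i = j then (1 : ℝ) else 0) = ∑ i, c i ^ 2 := by
    simp [sq]
  simp only [hgram, ← hdiag, mul_sub, sum_sub_distrib]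

theorem abs_norm_sq_sum_smul_sub_sum_sq_le (c : ι → ℝ) (g : ι → E) :
    |‖∑ i, c i • g i‖ ^ 2 - ∑ i, c i ^ 2| ≤
      (∑ i, c i ^ 2) * ∑ i, ∑ j, |⟪g i, g j⟫ - if i = j then (1 : ℝ) else 0| := by
  rw [norm_sq_sum_smul_sub_sum_sq, mul_sum]
  refine (abs_sum_le_sum_abs _ _).trans <| sum_le_sum fun i _ => ?_
  rw [mul_sum]
  refine (abs_sum_le_sum_abs _ _).trans <| sum_le_sum fun j _ => ?_
  rw [abs_mul]
  exact mul_le_mul_of_nonneg_right (abs_mul_le_sum_sq c i j) (abs_nonneg _)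

end Gram

section Deriv

variable {ι E : Type*} [Fintype ι] [NormedAddCommGroup E] [InnerProductSpace ℝ E]

theorem hasFDerivAt_sum_sq {v : ι → E → ℝ} {g : ι → E} {x : E}
    (hv : ∀ i, HasFDerivAt (v i) (innerSL ℝ (g i)) x) :
    HasFDerivAt (fun y => ∑ i, v i y ^ 2) (innerSL ℝ (∑ i, (2 * v i x) • g i)) x := by
  have hsq : ∀ i, HasFDerivAt (fun y => v i y ^ 2) (innerSL ℝ ((2 * v i x) • g i)) x := by
    refine fun i => ((hv i).pow 2).congr_fderiv ?_
    ext y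
    simp
  simpa only [map_sum] using HasFDerivAt.fun_sum fun i (_ : i ∈ univ) => hsq i

theorem HasFDerivAt.sqrt_innerSL {f : E → ℝ} {s x : E} (hf : HasFDerivAt f (innerSL ℝ s) x)
    (hx : f x ≠ 0) :
    HasFDerivAt (fun y => √(f y)) (innerSL ℝ ((2 * √(f x))⁻¹ • s)) x := by
  simpa only [map_smul, one_div] using hf.sqrt hx

end Deriv

theorem abs_norm_sq_inv_two_sqrt_smul_sub_one_le {E : Type*} [NormedAddCommGroup E]
    [InnerProductSpace ℝ E] {s : E} {ρ B : ℝ} (hρ : 0 < ρ) (h : |‖s‖ ^ 2 - 4 * ρ| ≤ 4 * ρ * B) :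
    |‖(2 * √ρ)⁻¹ • s‖ ^ 2 - 1| ≤ B := by
  have h4ρ : 0 < 4 * ρ := by positivity
  have hscale : ‖(2 * √ρ)⁻¹ • s‖ ^ 2 - 1 = (‖s‖ ^ 2 - 4 * ρ) / (4 * ρ) := by
    rw [norm_smul, mul_pow, norm_inv, Real.norm_eq_abs, abs_of_pos (by positivity), inv_pow,
      mul_pow, Real.sq_sqrt hρ.le]
    field_simp
    ring
  rw [hscale, abs_div, abs_of_pos h4ρ, div_le_iff₀ h4ρ]
  linarith

theorem stmt9_general {E : Type*} [NormedAddCommGroup E] [InnerProductSpace ℝ E]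
    (N : ℕ) (v : Fin N → E → ℝ) (g : Fin N → E) (x : E)
    (hv : ∀ i, HasFDerivAt (v i) ((innerSL ℝ) (g i)) x) :
    HasFDerivAt (fun y => ∑ i, v i y ^ 2)
        ((innerSL ℝ) (∑ i, (2 * v i x) • g i)) x ∧
    |‖∑ i, (2 * v i x) • g i‖ ^ 2 - 4 * ∑ i, v i x ^ 2| ≤
      4 * (∑ i, v i x ^ 2) *
        ∑ i, ∑ j, |⟪g i, g j⟫ - if i = j then (1 : ℝ) else 0| ∧
    (0 < ∑ i, v i x ^ 2 →
      HasFDerivAt (fun y => Real.sqrt (∑ i, v i y ^ 2))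
          ((innerSL ℝ)
            ((2 * Real.sqrt (∑ i, v i x ^ 2))⁻¹ • ∑ i, (2 * v i x) • g i)) x ∧
      |‖(2 * Real.sqrt (∑ i, v i x ^ 2))⁻¹ • ∑ i, (2 * v i x) • g i‖ ^ 2 - 1| ≤
        ∑ i, ∑ j, |⟪g i, g j⟫ - if i = j then (1 : ℝ) else 0|) := by
  have hρ := hasFDerivAt_sum_sq hv
  have hbound := abs_norm_sq_sum_smul_sub_sum_sq_le (fun i => 2 * v i x) g
  have hcoeff : ∑ i, (2 * v i x) ^ 2 = 4 * ∑ i, v i x ^ 2 := by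
    simp only [mul_pow, ← mul_sum]
    norm_num
  rw [hcoeff] at hbound
  exact ⟨hρ, hbound, fun hpos =>
    ⟨hρ.sqrt_innerSL hpos.ne', abs_norm_sq_inv_two_sqrt_smul_sub_one_le hpos hbound⟩⟩

/-- Let `E` be a real inner product space, `N ≥ 1` an integer,
`v = (v₁,…,v_N) : E → ℝ^N` with each component differentiable at `x ∈ E` with gradient
`g i` (i.e. derivative `y ↦ ⟪g i, y⟫`), and set `ρ := Σ_i v_i²`. Then `ρ` is differentiable at
`x` with gradient `∇ρ(x) = 2 Σ_i v_i(x) ∇v_i(x)`, and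
`| ‖∇ρ(x)‖² − 4 ρ(x) | ≤ 4 ρ(x) Σ_{i,j} |⟪∇v_i(x), ∇v_j(x)⟫ − δ_{ij}|`.
Consequently, if `ρ(x) > 0` and `r := √ρ`, then `r` is differentiable at `x` with gradient
`∇r(x) = ∇ρ(x)/(2√(ρ(x)))` and `| ‖∇r(x)‖² − 1 | ≤ Σ_{i,j} |⟪∇v_i(x), ∇v_j(x)⟫ − δ_{ij}|`. -/
theorem stmt9 {E : Type*} [NormedAddCommGroup E] [InnerProductSpace ℝ E]
    (N : ℕ) (hN : 1 ≤ N) (v : Fin N → E → ℝ) (g : Fin N → E) (x : E)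
    (hv : ∀ i, HasFDerivAt (v i) ((innerSL ℝ) (g i)) x) :
    HasFDerivAt (fun y => ∑ i, v i y ^ 2)
        ((innerSL ℝ) (∑ i, (2 * v i x) • g i)) x ∧
    |‖∑ i, (2 * v i x) • g i‖ ^ 2 - 4 * ∑ i, v i x ^ 2| ≤
      4 * (∑ i, v i x ^ 2) *
        ∑ i, ∑ j, |⟪g i, g j⟫ - if i = j then (1 : ℝ) else 0| ∧
    (0 < ∑ i, v i x ^ 2 →
      HasFDerivAt (fun y => Real.sqrt (∑ i, v i y ^ 2))
          ((innerSL ℝ)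
            ((2 * Real.sqrt (∑ i, v i x ^ 2))⁻¹ • ∑ i, (2 * v i x) • g i)) x ∧
      |‖(2 * Real.sqrt (∑ i, v i x ^ 2))⁻¹ • ∑ i, (2 * v i x) • g i‖ ^ 2 - 1| ≤
        ∑ i, ∑ j, |⟪g i, g j⟫ - if i = j then (1 : ℝ) else 0|) :=
  stmt9_general N v g x hv
end

section
/- Let (X,d) be a metric space, μ a Borel measure on X, x ∈ X, r > 0 and D ≥ 1. Assume 0 < μ(B_t(x)) < ∞ and μ(B_{4t}(x)) ≤ D · μ(B_t(x)) for all t ∈ [r/4, r]. Then for every measurable f : X → [0,∞], ⨍_{B_r(x)} f dμ ≤ (D / log 4) · ∫_{r/4}^r ( ⨍_{B_{4t}(x)} f dμ ) dt/t ≤ (D / log 4) · ∫_0^r ( ⨍_{B_{4t}(x)} f dμ ) dt/t. -/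
open MeasureTheory
open scoped ENNReal

/-!
For `r/4 < t ≤ r` the ball `B_{4t}(x)` contains `B_r(x)` and has measure at most
`D μ(B_t(x)) ≤ D μ(B_r(x))`, so `⨍_{B_r(x)} f ≤ D ⨍_{B_{4t}(x)} f`. Integrating this against
`dt/t` over `(r/4, r]`, an interval of logarithmic length `log 4`, gives the first inequality;
the second is monotonicity of the integral in the domain.
-/

theorem setLAverage_le_mul_setLAverage_of_subset {α : Type*} [MeasurableSpace α]
    {μ : Measure α} {s t : Set α} {C : ℝ≥0∞} (f : α → ℝ≥0∞) (hst : s ⊆ t)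
    (hμ : μ t ≤ C * μ s) (hC : C ≠ ⊤) :
    ⨍⁻ y in s, f y ∂μ ≤ C * ⨍⁻ y in t, f y ∂μ := by
  rcases eq_or_ne C 0 with rfl | hC0
  · have hs : μ s = 0 := measure_mono_null hst (by simpa using hμ)
    simp [setLAverage_eq, setLIntegral_measure_zero s f hs]
  rw [setLAverage_eq, setLAverage_eq, ← mul_div_assoc]
  calc (∫⁻ y in s, f y ∂μ) / μ s ≤ (∫⁻ y in t, f y ∂μ) / μ s :=
        ENNReal.div_le_div_right (lintegral_mono_set hst) _
    _ = C * (∫⁻ y in t, f y ∂μ) / (C * μ s) := (ENNReal.mul_div_mul_left _ _ hC0 hC).symm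
    _ ≤ C * (∫⁻ y in t, f y ∂μ) / μ t := ENNReal.div_le_div_left hμ _

theorem setLIntegral_Ioc_inv_ofReal {a b : ℝ} (ha : 0 < a) (hab : a ≤ b) :
    ∫⁻ t in Set.Ioc a b, (ENNReal.ofReal t)⁻¹ = ENNReal.ofReal (Real.log (b / a)) := by
  have hpos : ∀ t ∈ Set.Ioc a b, 0 < t := fun t ht => ha.trans ht.1
  rw [← integral_inv_of_pos ha (ha.trans_le hab), intervalIntegral.integral_of_le hab,
    ofReal_integral_eq_lintegral_ofReal]
  · exact setLIntegral_congr_fun measurableSet_Ioc fun t ht =>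
      (ENNReal.ofReal_inv_of_pos (hpos t ht)).symm
  · exact (intervalIntegrable_iff_integrableOn_Ioc_of_le hab).mp <|
      intervalIntegral.intervalIntegrable_inv (fun t ht => by
        rw [Set.uIcc_of_le hab] at ht; exact (ha.trans_le ht.1).ne') continuousOn_id
  · filter_upwards [ae_restrict_mem measurableSet_Ioc] with t ht
    exact inv_nonneg.mpr (hpos t ht).le

theorem mul_log_le_setLIntegral_div_ofReal {a b : ℝ} (ha : 0 < a) (hab : a ≤ b)
    {c : ℝ≥0∞} {g : ℝ → ℝ≥0∞} (hg : ∀ t ∈ Set.Ioc a b, c ≤ g t) :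
    c * ENNReal.ofReal (Real.log (b / a)) ≤ ∫⁻ t in Set.Ioc a b, g t / ENNReal.ofReal t := by
  rw [← setLIntegral_Ioc_inv_ofReal ha hab,
    ← lintegral_const_mul c (f := fun t => (ENNReal.ofReal t)⁻¹) ENNReal.measurable_ofReal.inv]
  exact setLIntegral_mono' measurableSet_Ioc fun t ht => by
    rw [div_eq_mul_inv]; gcongr; exact hg t ht

theorem stmt12_general {X : Type*} [MetricSpace X] [MeasurableSpace X]
    (μ : Measure X) (x : X) (r : ℝ) (hr : 0 < r) (D : ℝ)
    (hμ : ∀ t ∈ Set.Icc (r / 4) r,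
      0 < μ (Metric.ball x t) ∧ μ (Metric.ball x t) < ⊤ ∧
        μ (Metric.ball x (4 * t)) ≤ ENNReal.ofReal D * μ (Metric.ball x t))
    (f : X → ℝ≥0∞) :
    (⨍⁻ y in Metric.ball x r, f y ∂μ) ≤
      ENNReal.ofReal (D / Real.log 4) *
        ∫⁻ t in Set.Ioc (r / 4) r,
          (⨍⁻ y in Metric.ball x (4 * t), f y ∂μ) / ENNReal.ofReal t ∧
    ENNReal.ofReal (D / Real.log 4) *
        ∫⁻ t in Set.Ioc (r / 4) r,
          (⨍⁻ y in Metric.ball x (4 * t), f y ∂μ) / ENNReal.ofReal t ≤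
      ENNReal.ofReal (D / Real.log 4) *
        ∫⁻ t in Set.Ioc 0 r,
          (⨍⁻ y in Metric.ball x (4 * t), f y ∂μ) / ENNReal.ofReal t := by
  have hr4 : 0 < r / 4 := by positivity
  have hlog4 : 0 < Real.log 4 := Real.log_pos (by norm_num)
  refine ⟨?_, by gcongr⟩
  have hdoubling : ∀ t ∈ Set.Ioc (r / 4) r, ⨍⁻ y in Metric.ball x r, f y ∂μ ≤
      ENNReal.ofReal D * ⨍⁻ y in Metric.ball x (4 * t), f y ∂μ := fun t ht =>
    setLAverage_le_mul_setLAverage_of_subset f (Metric.ball_subset_ball (by linarith [ht.1]))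
      ((hμ t ⟨ht.1.le, ht.2⟩).2.2.trans (by gcongr; exact ht.2)) ENNReal.ofReal_ne_top
  have hlog : (⨍⁻ y in Metric.ball x r, f y ∂μ) * ENNReal.ofReal (Real.log 4) ≤
      ENNReal.ofReal D * ∫⁻ t in Set.Ioc (r / 4) r,
        (⨍⁻ y in Metric.ball x (4 * t), f y ∂μ) / ENNReal.ofReal t := by
    calc _ = (⨍⁻ y in Metric.ball x r, f y ∂μ) * ENNReal.ofReal (Real.log (r / (r / 4))) := by
          rw [show r / (r / 4) = 4 by field_simp]
      _ ≤ ∫⁻ t in Set.Ioc (r / 4) r,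
            ENNReal.ofReal D * (⨍⁻ y in Metric.ball x (4 * t), f y ∂μ) / ENNReal.ofReal t :=
          mul_log_le_setLIntegral_div_ofReal hr4 (by linarith) hdoubling
      _ = _ := by simp_rw [mul_div_assoc]; exact lintegral_const_mul' _ _ ENNReal.ofReal_ne_top
  rw [ENNReal.ofReal_div_of_pos hlog4, ← ENNReal.mul_div_right_comm,
    ENNReal.le_div_iff_mul_le (Or.inl (by simpa using hlog4)) (Or.inl ENNReal.ofReal_ne_top)]
  exact hlog

/-- Let `(X,d)` be a metric space, `μ` a Borel measure on `X`, `x ∈ X`,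
`r > 0` and `D ≥ 1`. Assume `0 < μ(B_t(x)) < ∞` and `μ(B_{4t}(x)) ≤ D μ(B_t(x))` for all
`t ∈ [r/4, r]`. Then for every measurable `f : X → [0,∞]`,
`⨍_{B_r(x)} f dμ ≤ (D/log 4) ∫_{r/4}^r (⨍_{B_{4t}(x)} f dμ) dt/t
  ≤ (D/log 4) ∫_0^r (⨍_{B_{4t}(x)} f dμ) dt/t`. -/
theorem stmt12 {X : Type*} [MetricSpace X] [MeasurableSpace X] [BorelSpace X]
    (μ : Measure X) (x : X) (r : ℝ) (hr : 0 < r) (D : ℝ) (hD : 1 ≤ D)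
    (hμ : ∀ t ∈ Set.Icc (r / 4) r,
      0 < μ (Metric.ball x t) ∧ μ (Metric.ball x t) < ⊤ ∧
        μ (Metric.ball x (4 * t)) ≤ ENNReal.ofReal D * μ (Metric.ball x t))
    (f : X → ℝ≥0∞) (hf : Measurable f) :
    (⨍⁻ y in Metric.ball x r, f y ∂μ) ≤
      ENNReal.ofReal (D / Real.log 4) *
        ∫⁻ t in Set.Ioc (r / 4) r,
          (⨍⁻ y in Metric.ball x (4 * t), f y ∂μ) / ENNReal.ofReal t ∧
    ENNReal.ofReal (D / Real.log 4) *
        ∫⁻ t in Set.Ioc (r / 4) r,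
          (⨍⁻ y in Metric.ball x (4 * t), f y ∂μ) / ENNReal.ofReal t ≤
      ENNReal.ofReal (D / Real.log 4) *
        ∫⁻ t in Set.Ioc 0 r,
          (⨍⁻ y in Metric.ball x (4 * t), f y ∂μ) / ENNReal.ofReal t :=
  stmt12_general μ x r hr D hμ f
end
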